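/- One-sided radius bound (Step 1 of Theorem 3.3): under the hypotheses that for every closed ball B, P(B) ≥ p + ε implies Q(B) ≥ p (with ε = β² + β√p), and the regularity assumption that |P(B(x, r_p(x)+η)) − P(B(x, r_p(x)))| ≤ ε implies |η| < Cε, one has r̂_p(x) ≤ r_p(x) + Cε for every x. -/

import Mathlib

/-!
Since `r ↦ P(B(x, r))` is monotone and right-continuous, the infimum `r_p(x)` is attained:
`P(B(x, r_p(x))) ≥ p`. If `P(B(x, r_p(x) + Cε)) < p + ε`, the increment of `P` over
`[r_p(x), r_p(x) + Cε]` would be at most `ε`, and regularity would give `Cε < Cε`. Hence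
`P(B(x, r_p(x) + Cε)) ≥ p + ε`, so `Q(B(x, r_p(x) + Cε)) ≥ p`, i.e. `r̂_p(x) ≤ r_p(x) + Cε`.
-/

open MeasureTheory Metric Set

noncomputable def rad {d : ℕ} (P : Measure (EuclideanSpace ℝ (Fin d))) (p : ℝ)
    (x : EuclideanSpace ℝ (Fin d)) : ℝ :=
  sInf {r : ℝ | 0 < r ∧ p ≤ (P (closedBall x r)).toReal}

open Filter Topology

section MeasureClosedBall

variable {X : Type*} [PseudoMetricSpace X] [MeasurableSpace X] (μ : Measure X) [IsFiniteMeasure μ]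
  (x : X)

theorem tendsto_measureReal_closedBall_atTop :
    Tendsto (fun r ↦ μ.real (closedBall x r)) atTop (𝓝 (μ.real univ)) := by
  have hunion : ⋃ r : ℝ, closedBall x r = univ :=
    eq_univ_of_forall fun y ↦ mem_iUnion.2 ⟨dist y x, mem_closedBall.2 le_rfl⟩
  have h := tendsto_measure_iUnion_atTop (μ := μ) fun _ _ ↦ closedBall_subset_closedBall (x := x)
  rw [hunion] at h
  exact (ENNReal.tendsto_toReal (measure_ne_top μ univ)).comp h

theorem tendsto_measureReal_closedBall_nhdsGT [OpensMeasurableSpace X] (r : ℝ) :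
    Tendsto (fun s ↦ μ.real (closedBall x s)) (𝓝[>] r) (𝓝 (μ.real (closedBall x r))) := by
  have h := tendsto_measure_biInter_gt (μ := μ) (s := closedBall x) (a := r)
    (fun _ _ ↦ measurableSet_closedBall.nullMeasurableSet)
    (fun _ _ _ ↦ closedBall_subset_closedBall) ⟨r + 1, by linarith, measure_ne_top μ _⟩
  rw [biInter_gt_closedBall] at h
  exact (ENNReal.tendsto_toReal (measure_ne_top μ _)).comp h

end MeasureClosedBall

section Rad

variable {d : ℕ} (P : Measure (EuclideanSpace ℝ (Fin d))) (p : ℝ) (x : EuclideanSpace ℝ (Fin d))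

theorem rad_nonneg : 0 ≤ rad P p x :=
  Real.sInf_nonneg fun _ hr ↦ hr.1.le

variable {P p x} in
theorem rad_le {r : ℝ} (hr : 0 < r) (h : p ≤ P.real (closedBall x r)) : rad P p x ≤ r :=
  csInf_le ⟨0, fun _ hs ↦ hs.1.le⟩ ⟨hr, h⟩

variable [IsFiniteMeasure P] {p} in
theorem le_measureReal_closedBall_rad (hp : p < P.real univ) :
    p ≤ P.real (closedBall x (rad P p x)) := by
  have hne : {r : ℝ | 0 < r ∧ p ≤ P.real (closedBall x r)}.Nonempty :=
    (((tendsto_measureReal_closedBall_atTop P x).eventually (eventually_ge_nhds hp)).and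
      (eventually_gt_atTop 0)).exists.imp fun _ h ↦ ⟨h.2, h.1⟩
  refine ge_of_tendsto (tendsto_measureReal_closedBall_nhdsGT P x _) ?_
  filter_upwards [self_mem_nhdsWithin] with r (hr : rad P p x < r)
  obtain ⟨s, ⟨-, hs⟩, hsr⟩ := exists_lt_of_csInf_lt hne hr
  exact hs.trans (measureReal_mono (closedBall_subset_closedBall hsr.le))

end Rad

theorem stmt5_general {d : ℕ} (P Q : Measure (EuclideanSpace ℝ (Fin d)))
    [IsProbabilityMeasure P]
    (p ε C : ℝ) (hp : p ∈ Set.Ioo (0:ℝ) 1) (hε : 0 < ε) (hC : 0 < C)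
    (hi : ∀ (x : EuclideanSpace ℝ (Fin d)) (r : ℝ),
      p + ε ≤ (P (closedBall x r)).toReal → p ≤ (Q (closedBall x r)).toReal)
    (hreg : ∀ (x : EuclideanSpace ℝ (Fin d)) (η : ℝ),
      |(P (closedBall x (rad P p x + η))).toReal - (P (closedBall x (rad P p x))).toReal| ≤ ε →
        |η| < C * ε) :
    ∀ x : EuclideanSpace ℝ (Fin d), rad Q p x ≤ rad P p x + C * ε := by
  simp only [← measureReal_def] at hi hreg
  intro x
  set r := rad P p x
  have hCε : 0 < C * ε := mul_pos hC hε
  have hr : p ≤ P.real (closedBall x r) :=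
    le_measureReal_closedBall_rad P x (by simpa using hp.2)
  have hgrowth : p + ε ≤ P.real (closedBall x (r + C * ε)) := by
    by_contra! hsmall
    have hmono : P.real (closedBall x r) ≤ P.real (closedBall x (r + C * ε)) :=
      measureReal_mono (closedBall_subset_closedBall (by linarith))
    have hjump := hreg x (C * ε) (by rw [abs_of_nonneg (by linarith)]; linarith)
    exact (abs_of_pos hCε ▸ hjump).false
  exact rad_le (by linarith [rad_nonneg P p x]) (hi x _ hgrowth)

theorem stmt5 {d : ℕ} (P Q : Measure (EuclideanSpace ℝ (Fin d)))
    [IsProbabilityMeasure P] [IsProbabilityMeasure Q]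
    (p ε C : ℝ) (hp : p ∈ Set.Ioo (0:ℝ) 1) (hε : 0 < ε) (hC : 0 < C)
    (hi : ∀ (x : EuclideanSpace ℝ (Fin d)) (r : ℝ),
      p + ε ≤ (P (closedBall x r)).toReal → p ≤ (Q (closedBall x r)).toReal)
    (hreg : ∀ (x : EuclideanSpace ℝ (Fin d)) (η : ℝ),
      |(P (closedBall x (rad P p x + η))).toReal - (P (closedBall x (rad P p x))).toReal| ≤ ε →
        |η| < C * ε) :
    ∀ x : EuclideanSpace ℝ (Fin d), rad Q p x ≤ rad P p x + C * ε :=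
  stmt5_general P Q p ε C hp hε hC hi hreg
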